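/- arXiv:1109.6492 — 5 statements merged into one kernel-verified Lean document; each statement's English description precedes it below -/
import Mathlib

section
/- Let M be a point measure on C_0 (the space of nonnegative, nonzero continuous functions on a compact metric space T) such that for every ε > 0 the set of atoms f of M with ‖f‖ > ε is finite. Then the pointwise supremum map max(M) : T → [0,∞), defined by max(M)(t) = max{f(t) : f an atom of M} (with max(M) ≡ 0 if M = 0), is a continuous function on T. -/
open MeasureTheory Set ENNReal

noncomputable section

/-- The set of atoms of a point measure. -/
def atomsOf {α : Type*} [MeasurableSpace α] (M : Measure α) : Set α := {f | M {f} ≠ 0}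

/-- Pointwise maximum function `max(M)(t) = max {f t : f atom of M}`. -/
def maxM {T : Type*} [TopologicalSpace T] [MeasurableSpace C(T, ℝ)]
    (M : Measure C(T, ℝ)) (t : T) : ℝ :=
  sSup ((fun f : C(T, ℝ) => f t) '' atomsOf M)

/-- `M` belongs to `M_p(C_0)`: a point measure on nonnegative nonzero continuous
functions, with finitely many atoms (with multiplicity) of norm `> ε` for every `ε > 0`. -/
def IsMp {T : Type*} [MetricSpace T] [CompactSpace T] [MeasurableSpace C(T, ℝ)]
    (M : Measure C(T, ℝ)) : Prop :=
  ∃ (c : ℕ → ℕ) (φ : ℕ → C(T, ℝ)),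
    M = Measure.sum (fun n => (c n : ℝ≥0∞) • Measure.dirac (φ n)) ∧
    (∀ n, c n ≠ 0 → 0 ≤ φ n ∧ φ n ≠ 0) ∧
    (∀ ε : ℝ, 0 < ε → {n | c n ≠ 0 ∧ ε < ‖φ n‖}.Finite)

/-- `Φ` is a Poisson random measure on `α` with intensity `μ`, under `P`. -/
def IsPoissonPM {Ω : Type*} [MeasurableSpace Ω] {α : Type*} [MeasurableSpace α]
    (P : Measure Ω) (Φ : Ω → Measure α) (μ : Measure α) : Prop :=
  (∀ A : Set α, MeasurableSet A → Measurable fun ω => Φ ω A) ∧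
  (∀ A : Set α, MeasurableSet A → μ A ≠ ⊤ → ∀ n : ℕ,
      P {ω | Φ ω A = n} =
        ENNReal.ofReal (Real.exp (-(μ A).toReal) * (μ A).toReal ^ n / n.factorial)) ∧
  ∀ (m : ℕ) (A : Fin m → Set α), (∀ i, MeasurableSet (A i)) →
      Pairwise (Function.onFun Disjoint A) →
      ProbabilityTheory.iIndepFun (fun i ω => Φ ω (A i)) P

/-- `exp(-x)` for extended nonnegative `x`. -/
def Eexp (x : ℝ≥0∞) : ℝ≥0∞ :=
  if x = ⊤ then 0 else ENNReal.ofReal (Real.exp (-x.toReal))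


/-! Every atom is nonnegative and only finitely many have sup norm above `ε`, so the pointwise
maximum of `0` and those finitely many atoms is a continuous function within `ε` of `max(M)`
everywhere: `max(M)` is a uniform limit of continuous functions. -/

theorem atomsOf_sum_smul_dirac {α ι : Type*} [MeasurableSpace α] [MeasurableSingletonClass α]
    (c : ι → ℝ≥0∞) (φ : ι → α) :
    atomsOf (Measure.sum fun i => c i • Measure.dirac (φ i)) = φ '' {i | c i ≠ 0} := by
  ext f
  simp [atomsOf, ENNReal.tsum_eq_zero]

def pointwiseSup {T : Type*} [TopologicalSpace T] (S : Set C(T, ℝ)) (t : T) : ℝ :=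
  sSup ((fun f : C(T, ℝ) => f t) '' S)

section

variable {T : Type*} [TopologicalSpace T]

theorem pointwiseSup_finset_eq_sup' {F : Finset C(T, ℝ)} (hF : F.Nonempty) :
    pointwiseSup (F : Set C(T, ℝ)) = ⇑(F.sup' hF id) := by
  ext t
  rw [pointwiseSup, ContinuousMap.sup'_apply, Finset.sup'_eq_csSup_image]
  rfl

theorem continuous_pointwiseSup_of_finite {F : Set C(T, ℝ)} (hF : F.Finite) :
    Continuous (pointwiseSup F) := by
  lift F to Finset C(T, ℝ) using hF
  obtain rfl | hne := F.eq_empty_or_nonempty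
  · exact (continuous_const (y := (0 : ℝ))).congr fun t => by simp [pointwiseSup]
  · rw [pointwiseSup_finset_eq_sup' hne]
    exact (F.sup' hne id).continuous

variable [CompactSpace T]

theorem abs_pointwiseSup_sub_insert_zero_le {S : Set C(T, ℝ)} {ε : ℝ} (hε : 0 ≤ ε) (hnn : ∀ f ∈ S, 0 ≤ f)
    (hfin : {f ∈ S | ε < ‖f‖}.Finite) (t : T) :
    |pointwiseSup S t - pointwiseSup (insert 0 {f ∈ S | ε < ‖f‖}) t| ≤ ε := by
  set F : Set C(T, ℝ) := insert 0 {f ∈ S | ε < ‖f‖}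
  set g := pointwiseSup F t
  have hle_sup : ∀ f ∈ F, f t ≤ g := fun f hf =>
    le_csSup ((hfin.insert 0).image _).bddAbove ⟨f, hf, rfl⟩
  have hg : 0 ≤ g := hle_sup 0 (mem_insert 0 _)
  have hle : ∀ f ∈ S, f t ≤ g + ε := by
    intro f hf
    by_cases hlarge : ε < ‖f‖
    · linarith [hle_sup f (mem_insert_of_mem 0 ⟨hf, hlarge⟩)]
    · linarith [f.apply_le_norm t]
  have hbdd : BddAbove ((fun f : C(T, ℝ) => f t) '' S) := by
    refine ⟨g + ε, ?_⟩
    rintro _ ⟨f, hf, rfl⟩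
    exact hle f hf
  have hupper : pointwiseSup S t ≤ g + ε :=
    Real.sSup_le (by rintro _ ⟨f, hf, rfl⟩; exact hle f hf) (by linarith)
  have hlower : g ≤ pointwiseSup S t := by
    refine csSup_le ((insert_nonempty 0 _).image _) ?_
    rintro _ ⟨f, hf | hf, rfl⟩
    · subst hf
      exact Real.sSup_nonneg (by rintro _ ⟨f, hf, rfl⟩; exact hnn f hf t)
    · exact le_csSup hbdd ⟨f, hf.1, rfl⟩
  rw [abs_sub_le_iff]
  constructor <;> linarith

theorem continuous_pointwiseSup {S : Set C(T, ℝ)} (hnn : ∀ f ∈ S, 0 ≤ f)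
    (hfin : ∀ ε > 0, {f ∈ S | ε < ‖f‖}.Finite) : Continuous (pointwiseSup S) := by
  refine continuous_of_uniform_approx_of_continuous fun u hu => ?_
  obtain ⟨ε, hε, hεu⟩ := Metric.mem_uniformity_dist.1 hu
  have hε2 := half_pos hε
  refine ⟨_, continuous_pointwiseSup_of_finite ((hfin _ hε2).insert 0), fun t => hεu ?_⟩
  rw [Real.dist_eq]
  exact (abs_pointwiseSup_sub_insert_zero_le hε2.le hnn (hfin _ hε2) t).trans_lt (half_lt_self hε)

end

/-- if `M ∈ M_p(C_0)` then the pointwise supremum map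
`max(M) : t ↦ max {f t : f atom of M}` is continuous on `T`. -/
theorem maxM_continuous {T : Type*} [MetricSpace T] [CompactSpace T]
    [MeasurableSpace C(T, ℝ)] [BorelSpace C(T, ℝ)]
    (M : Measure C(T, ℝ)) (hM : IsMp M) :
    Continuous (maxM M) := by
  obtain ⟨c, φ, rfl, hφ, hfin⟩ := hM
  change Continuous (pointwiseSup (atomsOf _))
  simp only [atomsOf_sum_smul_dirac, ne_eq, Nat.cast_eq_zero]
  refine continuous_pointwiseSup ?_ fun ε hε => ((hfin ε hε).image φ).subset ?_
  · rintro _ ⟨n, hn, rfl⟩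
    exact (hφ n hn).1
  · rintro _ ⟨⟨n, hn, rfl⟩, hlarge⟩
    exact ⟨n, ⟨hn, hlarge⟩, rfl⟩
end
end

section
/- Let g be a continuous function on a closed set K ⊆ T. Then the set C_K^-(g) = {M ∈ M_p(C_0) : every atom f of M satisfies f(t) < g(t) for all t ∈ K} is measurable with respect to the σ-algebra on M_p(C_0) generated by the evaluation maps M ↦ M(A) for Borel sets A ⊆ C_0. -/
open MeasureTheory Set ENNReal

noncomputable section

/-! The atoms of `M ∈ C_K^-(g)` all lie in `U = {f | f <_K g}`, which is open in the compact-open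
topology because `K` is compact. A point measure has all its atoms in a Borel set `U` iff it gives
`Uᶜ` mass zero, so `C_K^-(g)` is the trace on `M_p(C_0)` of the generating set `{M | M Uᶜ = 0}`. -/

lemma ContinuousMap.isOpen_setOf_forall_lt {X : Type*} [TopologicalSpace X] {K : Set X}
    (hK : IsCompact K) (g : C(X, ℝ)) :
    IsOpen {f : C(X, ℝ) | ∀ t ∈ K, f t < g t} := by
  have hsub : IsOpen {h : C(X, ℝ) | MapsTo h K (Iio 0)} :=
    ContinuousMap.isOpen_setOfPred_mapsTo hK isOpen_Iio
  convert hsub.preimage (continuous_sub_right g) using 1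
  ext f
  simp [MapsTo]

lemma notMem_of_mem_atomsOf_of_measure_eq_zero {α : Type*} [MeasurableSpace α] {M : Measure α}
    {s : Set α} {f : α} (hs : M s = 0) (hf : f ∈ atomsOf M) : f ∉ s :=
  fun hfs => hf (measure_mono_null (singleton_subset_iff.2 hfs) hs)

section PointMeasure

variable {α ι : Type*} [MeasurableSpace α] (c : ι → ℝ≥0∞) (φ : ι → α)

lemma mem_atomsOf_sum_smul_dirac {n : ι} (hn : c n ≠ 0) :
    φ n ∈ atomsOf (Measure.sum fun n => c n • Measure.dirac (φ n)) := by
  intro hzero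
  have hle := Measure.le_sum (fun n => c n • Measure.dirac (φ n)) n {φ n}
  rw [hzero, Measure.smul_apply, Measure.dirac_apply_of_mem (mem_singleton _), smul_eq_mul,
    mul_one] at hle
  exact hn (nonpos_iff_eq_zero.1 hle)

lemma atomsOf_sum_smul_dirac_subset_iff [Countable ι] {s : Set α} (hs : MeasurableSet s) :
    atomsOf (Measure.sum fun n => c n • Measure.dirac (φ n)) ⊆ s ↔
      (Measure.sum fun n => c n • Measure.dirac (φ n)) sᶜ = 0 := by
  refine ⟨fun hsub => Measure.sum_apply_eq_zero.2 fun n => ?_, fun hzero f hf => ?_⟩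
  · rcases eq_or_ne (c n) 0 with hn | hn
    · simp [hn]
    · have hφ : φ n ∉ sᶜ := not_notMem.2 (hsub (mem_atomsOf_sum_smul_dirac c φ hn))
      simp [Measure.dirac_apply' _ hs.compl, indicator_of_notMem hφ]
  · exact not_notMem.1 (notMem_of_mem_atomsOf_of_measure_eq_zero hzero hf)

end PointMeasure

lemma measurableSet_setOf_atomsOf_subset {T : Type*} [MetricSpace T] [CompactSpace T]
    [MeasurableSpace C(T, ℝ)] {s : Set C(T, ℝ)} (hs : MeasurableSet s) :
    MeasurableSet {M : {M : Measure C(T, ℝ) // IsMp M} | atomsOf (M : Measure C(T, ℝ)) ⊆ s} := by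
  have hset : {M : {M : Measure C(T, ℝ) // IsMp M} | atomsOf (M : Measure C(T, ℝ)) ⊆ s} =
      Subtype.val ⁻¹' {M : Measure C(T, ℝ) | M sᶜ = 0} := by
    ext ⟨M, c, φ, rfl, -, -⟩
    exact atomsOf_sum_smul_dirac_subset_iff _ φ hs
  rw [hset]
  exact measurable_subtype_coe (Measure.measurable_coe hs.compl (measurableSet_singleton 0))

/-- for a closed set `K ⊆ T` and a continuous function `g`, the set
`C_K^-(g) = {M ∈ M_p(C_0) : ∀ atom f of M, f <_K g}` is measurable for the σ-algebra
on `M_p(C_0)` induced by the σ-algebra on measures generated by `M ↦ M(A)`, `A` Borel. -/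
theorem measurableSet_CKminus {T : Type*} [MetricSpace T] [CompactSpace T]
    [MeasurableSpace C(T, ℝ)] [BorelSpace C(T, ℝ)]
    (K : Set T) (hK : IsClosed K) (g : C(T, ℝ)) :
    MeasurableSet {M : {M : Measure C(T, ℝ) // IsMp M} |
      ∀ f ∈ atomsOf (M : Measure C(T, ℝ)), ∀ t ∈ K, f t < g t} :=
  measurableSet_setOf_atomsOf_subset
    (ContinuousMap.isOpen_setOf_forall_lt hK.isCompact g).measurableSet
end
end

section
/- The set C_K^+ = {M ∈ M_p(C_0) : every atom f of M satisfies f(t) ≥ max(M)(t) for some t ∈ K} (i.e., every atom is K-extremal) is measurable with respect to the σ-algebra M_p on M_p(C_0). -/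
open MeasureTheory Set ENNReal

noncomputable section

/-! The atoms of `M ∈ M_p(C_0)` above any level `ε > 0` are finitely many and the rest stay below
`ε`, so `max(M)` is continuous. Hence, with `D` a countable dense subset of the compact set `K`,
an atom `f` is `K`-sub-extremal iff `f + q ≤ max(M)` on `D` for some `q > 0`. Approximating `f` by
a dense sequence `gⱼ` of `C(T, ℝ)` up to a rational radius turns "`M` has a `K`-sub-extremal atom"
into a countable union of conditions `M(ball gⱼ q) ≠ 0` and `gⱼ t + 2q ≤ max(M)(t)`, `t ∈ D`, each
measurable because `M ↦ max(M)(t)` is. -/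

open TopologicalSpace Topology

section PointMeasure

variable {α ι : Type*} [MeasurableSpace α] [MeasurableSingletonClass α] [Countable ι]
  {w : ι → ℝ≥0∞} {φ : ι → α}

lemma sum_smul_dirac_ne_zero_iff (A : Set α) :
    Measure.sum (fun i => w i • Measure.dirac (φ i)) A ≠ 0 ↔ ∃ i, w i ≠ 0 ∧ φ i ∈ A := by
  classical
  simp [Measure.sum_apply_of_countable, Measure.dirac_apply, Set.indicator_apply, and_comm]

lemma mem_atomsOf_sum_smul_dirac_iff (f : α) :
    f ∈ atomsOf (Measure.sum fun i => w i • Measure.dirac (φ i)) ↔ ∃ i, w i ≠ 0 ∧ φ i = f :=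
  sum_smul_dirac_ne_zero_iff {f}

end PointMeasure

namespace IsMp

variable {T : Type*} [MetricSpace T] [CompactSpace T] [MeasurableSpace C(T, ℝ)]
  [BorelSpace C(T, ℝ)] {M : Measure C(T, ℝ)}

lemma measure_ne_zero_iff (hM : IsMp M) (A : Set C(T, ℝ)) :
    M A ≠ 0 ↔ ∃ f ∈ atomsOf M, f ∈ A := by
  obtain ⟨c, φ, rfl, -, -⟩ := hM
  simp only [sum_smul_dirac_ne_zero_iff, mem_atomsOf_sum_smul_dirac_iff]
  constructor
  · rintro ⟨n, hn, hφn⟩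
    exact ⟨φ n, ⟨n, hn, rfl⟩, hφn⟩
  · rintro ⟨-, ⟨n, hn, rfl⟩, hφn⟩
    exact ⟨n, hn, hφn⟩

lemma nonneg_of_mem_atomsOf (hM : IsMp M) {f : C(T, ℝ)} (hf : f ∈ atomsOf M) : 0 ≤ f := by
  obtain ⟨c, φ, rfl, hpos, -⟩ := hM
  obtain ⟨n, hn, rfl⟩ := (mem_atomsOf_sum_smul_dirac_iff f).1 hf
  exact (hpos n (Nat.cast_ne_zero.1 hn)).1

lemma finite_atomsOf_norm_gt (hM : IsMp M) {ε : ℝ} (hε : 0 < ε) :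
    {f ∈ atomsOf M | ε < ‖f‖}.Finite := by
  obtain ⟨c, φ, rfl, -, hfin⟩ := hM
  refine ((hfin ε hε).image φ).subset ?_
  rintro f ⟨hf, hεf⟩
  obtain ⟨n, hn, rfl⟩ := (mem_atomsOf_sum_smul_dirac_iff f).1 hf
  exact ⟨n, ⟨Nat.cast_ne_zero.1 hn, hεf⟩, rfl⟩

lemma bddAbove_eval_atomsOf (hM : IsMp M) (t : T) :
    BddAbove ((fun f : C(T, ℝ) => f t) '' atomsOf M) := by
  obtain ⟨B, hB⟩ := ((hM.finite_atomsOf_norm_gt one_pos).image (‖·‖)).bddAbove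
  refine ⟨max 1 B, ?_⟩
  rintro _ ⟨f, hf, rfl⟩
  have hft : f t ≤ ‖f‖ := (le_abs_self _).trans (f.norm_coe_le_norm t)
  by_cases h : 1 < ‖f‖
  · exact hft.trans ((hB ⟨f, ⟨hf, h⟩, rfl⟩).trans (le_max_right _ _))
  · exact hft.trans ((not_lt.1 h).trans (le_max_left _ _))

lemma le_maxM (hM : IsMp M) {f : C(T, ℝ)} (hf : f ∈ atomsOf M) (t : T) : f t ≤ maxM M t :=
  le_csSup (hM.bddAbove_eval_atomsOf t) ⟨f, hf, rfl⟩

lemma maxM_nonneg (hM : IsMp M) (t : T) : 0 ≤ maxM M t :=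
  Real.sSup_nonneg <| by
    rintro _ ⟨f, hf, rfl⟩
    exact hM.nonneg_of_mem_atomsOf hf t

lemma lt_maxM_iff (hM : IsMp M) {x : ℝ} {t : T} :
    x < maxM M t ↔ x < 0 ∨ ∃ f ∈ atomsOf M, x < f t := by
  constructor
  · intro hx
    rcases (atomsOf M).eq_empty_or_nonempty with hempty | hne
    · exact Or.inl (by simpa [maxM, hempty] using hx)
    · obtain ⟨_, ⟨f, hf, rfl⟩, hxf⟩ := exists_lt_of_lt_csSup (hne.image _) hx
      exact Or.inr ⟨f, hf, hxf⟩
  · rintro (hx | ⟨f, hf, hxf⟩)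
    · exact hx.trans_le (hM.maxM_nonneg t)
    · exact hxf.trans_le (hM.le_maxM hf t)

lemma lowerSemicontinuous_maxM (hM : IsMp M) : LowerSemicontinuous (maxM M) := by
  intro t x hx
  rcases hM.lt_maxM_iff.1 hx with hx | ⟨f, hf, hxf⟩
  · exact Filter.Eventually.of_forall fun _ => hM.lt_maxM_iff.2 (Or.inl hx)
  · filter_upwards [continuousAt_const.eventually_lt f.continuous.continuousAt hxf] with s hs
    exact hM.lt_maxM_iff.2 (Or.inr ⟨f, hf, hs⟩)

/-- Near `t`, `max(M)` stays below any `b > max(M)(t)`: the finitely many atoms of norm `> b` are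
`< b` near `t` by continuity, and all the others are `≤ b` everywhere. -/
lemma upperSemicontinuous_maxM (hM : IsMp M) : UpperSemicontinuous (maxM M) := by
  intro t x hx
  obtain ⟨b, htb, hbx⟩ := exists_between hx
  have hb : 0 < b := (hM.maxM_nonneg t).trans_lt htb
  have hG := hM.finite_atomsOf_norm_gt hb
  have hlt : ∀ᶠ s in 𝓝 t, ∀ f ∈ {f ∈ atomsOf M | b < ‖f‖}, f s < b :=
    hG.eventually_all.2 fun f hf =>
      f.continuous.continuousAt.eventually_lt continuousAt_const ((hM.le_maxM hf.1 t).trans_lt htb)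
  filter_upwards [hlt] with s hs
  refine lt_of_le_of_lt (Real.sSup_le ?_ hb.le) hbx
  rintro _ ⟨f, hf, rfl⟩
  by_cases hfb : b < ‖f‖
  · exact (hs f ⟨hf, hfb⟩).le
  · exact (le_abs_self _).trans ((f.norm_coe_le_norm s).trans (not_lt.1 hfb))

lemma continuous_maxM (hM : IsMp M) : Continuous (maxM M) :=
  continuous_iff_lower_upperSemicontinuous.2
    ⟨hM.lowerSemicontinuous_maxM, hM.upperSemicontinuous_maxM⟩

end IsMp

section Measurability

variable {T : Type*} [MetricSpace T] [CompactSpace T] [MeasurableSpace C(T, ℝ)]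

lemma measurableSet_measure_ne_zero {A : Set C(T, ℝ)} (hA : MeasurableSet A) :
    MeasurableSet {M : {M : Measure C(T, ℝ) // IsMp M} | (M : Measure C(T, ℝ)) A ≠ 0} :=
  measurable_subtype_coe (Measure.measurable_coe hA (measurableSet_singleton 0).compl)

lemma measurable_maxM [BorelSpace C(T, ℝ)] (t : T) :
    Measurable fun M : {M : Measure C(T, ℝ) // IsMp M} => maxM (M : Measure C(T, ℝ)) t := by
  refine measurable_of_Ioi fun x => ?_
  have hset : (fun M : {M : Measure C(T, ℝ) // IsMp M} => maxM (M : Measure C(T, ℝ)) t) ⁻¹'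
      Ioi x = {_M : {M : Measure C(T, ℝ) // IsMp M} | x < 0} ∪
        {M | (M : Measure C(T, ℝ)) {f | x < f t} ≠ 0} := by
    ext ⟨M, hM⟩
    simp only [mem_preimage, mem_Ioi, mem_union, mem_ofPred_eq, hM.lt_maxM_iff,
      hM.measure_ne_zero_iff]
  rw [hset]
  exact (MeasurableSet.const _).union <| measurableSet_measure_ne_zero
    (isOpen_lt continuous_const (continuous_eval_const t)).measurableSet

end Measurability

lemma forall_lt_iff_exists_pos_add_le {T : Type*} [TopologicalSpace T] {K D : Set T}
    (hK : IsCompact K) (hDK : D ⊆ K) (hKD : K ⊆ closure D) {f m : T → ℝ}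
    (hf : Continuous f) (hm : Continuous m) :
    (∀ t ∈ K, f t < m t) ↔ ∃ q > 0, ∀ t ∈ D, f t + q ≤ m t := by
  constructor
  · intro hlt
    obtain ⟨q, hq, hqK⟩ := hK.exists_forall_le' (f := fun t => m t - f t)
      (hm.sub hf).continuousOn (a := 0) fun t ht => sub_pos.2 (hlt t ht)
    exact ⟨q, hq, fun t ht => by linarith [hqK t (hDK ht)]⟩
  · rintro ⟨q, hq, hqD⟩ t ht
    have hclosed : IsClosed {t | f t + q ≤ m t} := isClosed_le (hf.add continuous_const) hm
    have := hclosed.closure_subset_iff.2 hqD (hKD ht)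
    exact (lt_add_of_pos_right _ hq).trans_le this

lemma exists_pos_add_le_iff_exists_rat_ball {T : Type*} [TopologicalSpace T] [CompactSpace T]
    {g : ℕ → C(T, ℝ)} (hg : DenseRange g) (S : Set C(T, ℝ)) (D : Set T) (m : T → ℝ) :
    (∃ f ∈ S, ∃ q > 0, ∀ t ∈ D, f t + q ≤ m t) ↔
      ∃ j, ∃ q : ℚ, 0 < q ∧ (∃ f ∈ S, f ∈ Metric.ball (g j) q) ∧
        ∀ t ∈ D, g j t + 2 * q ≤ m t := by
  have hclose : ∀ {f g : C(T, ℝ)} {r : ℝ}, dist f g < r → ∀ t, |f t - g t| < r :=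
    fun hfg t => (ContinuousMap.dist_apply_le_dist t).trans_lt hfg
  constructor
  · rintro ⟨f, hf, q₀, hq₀, hfD⟩
    obtain ⟨q, hq, hq₃⟩ := exists_rat_btwn (div_pos hq₀ three_pos)
    obtain ⟨j, hj⟩ := hg.exists_dist_lt f hq
    refine ⟨j, q, Rat.cast_pos.1 hq, ⟨f, hf, Metric.mem_ball.2 hj⟩, fun t ht => ?_⟩
    have := (abs_lt.1 (hclose hj t)).1
    linarith [hfD t ht]
  · rintro ⟨j, q, hq, ⟨f, hf, hfj⟩, hjD⟩
    refine ⟨f, hf, q, Rat.cast_pos.2 hq, fun t ht => ?_⟩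
    have := (abs_lt.1 (hclose (Metric.mem_ball.1 hfj) t)).2
    linarith [hjD t ht]

/-- for a closed set `K ⊆ T`, the set
`C_K^+ = {M ∈ M_p(C_0) : every atom f of M satisfies f(t) ≥ max(M)(t) for some t ∈ K}`
is measurable for the σ-algebra on `M_p(C_0)` induced by the σ-algebra on measures
generated by the evaluation maps `M ↦ M(A)`, `A` Borel. -/
theorem measurableSet_CKplus {T : Type*} [MetricSpace T] [CompactSpace T]
    [MeasurableSpace C(T, ℝ)] [BorelSpace C(T, ℝ)]
    (K : Set T) (hK : IsClosed K) :
    MeasurableSet {M : {M : Measure C(T, ℝ) // IsMp M} |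
      ∀ f ∈ atomsOf (M : Measure C(T, ℝ)), ∃ t ∈ K, maxM (M : Measure C(T, ℝ)) t ≤ f t} := by
  obtain ⟨D, hDK, hDc, hKD⟩ := (IsSeparable.of_separableSpace K).exists_countable_dense_subset
  obtain ⟨g, hg⟩ := exists_dense_seq C(T, ℝ)
  have hset : {M : {M : Measure C(T, ℝ) // IsMp M} |
      ∀ f ∈ atomsOf (M : Measure C(T, ℝ)), ∃ t ∈ K, maxM (M : Measure C(T, ℝ)) t ≤ f t} =
      (⋃ (j : ℕ) (q : ℚ) (_ : 0 < q),
        {M : {M : Measure C(T, ℝ) // IsMp M} | (M : Measure C(T, ℝ)) (Metric.ball (g j) q) ≠ 0} ∩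
          ⋂ t ∈ D, {M | g j t + 2 * q ≤ maxM (M : Measure C(T, ℝ)) t})ᶜ := by
    ext ⟨M, hM⟩
    have hsub := fun f : C(T, ℝ) => forall_lt_iff_exists_pos_add_le hK.isCompact hDK hKD
      f.continuous hM.continuous_maxM
    rw [mem_compl_iff, iff_not_comm]
    simp only [mem_iUnion, mem_inter_iff, mem_iInter, mem_ofPred_eq, exists_prop,
      hM.measure_ne_zero_iff, ← exists_pos_add_le_iff_exists_rat_ball hg, ← hsub]
    simp only [not_forall, not_exists, not_and, not_le, exists_prop]
  rw [hset]
  refine (MeasurableSet.iUnion fun j => MeasurableSet.iUnion fun q => MeasurableSet.iUnion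
    fun _ => ?_).compl
  exact (measurableSet_measure_ne_zero Metric.isOpen_ball.measurableSet).inter <|
    MeasurableSet.biInter hDc fun t _ => measurableSet_le measurable_const (measurable_maxM t)
end
end

section
/- Let μ̄_t : (0,∞) → [0,∞] be a non-increasing, left-continuous function with μ̄_t(0^+) = +∞, and let μ_t be the associated measure with μ_t([x,∞)) = μ̄_t(x). Then ∫_{(0,∞)} exp(−μ̄_t(y)) μ_t(dy) = ∫_0^∞ e^{-x} μ_t(A_x) dx where A_x = {y > 0 : μ̄_t(y) ≤ x}, and this integral equals 1 if and only if μ̄_t is continuous on (0,∞). (In general μ_t(A_x) ≤ x, so the integral is at most 1.) -/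
open MeasureTheory Set ENNReal

noncomputable section

/-
Writing `exp (-c) = ∫_{x > 0, c ≤ x} e^{-x} dx` (zero for `c = ∞`) and exchanging the two
integrals gives the identity. The sublevel set `A_x` is an up-set of `(0, ∞)`, so it is
`[a, ∞)` or `(a, ∞)` with `a = inf A_x`; in both cases its measure is a value or a right limit
of the tail on `A_x`, hence at most `x`. As `∫_0^∞ e^{-x} x dx = Γ(2) = 1`, the integral is `1`
exactly when `μ_t(A_x) = x` for almost every `x`. If the tail is continuous, the intermediate
value theorem gives `a > 0` with `μ̄_t(a) = x` and `[a, ∞) ⊆ A_x`. The tail is left-continuous,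
so a discontinuity at `y₀` is a jump `μ_t((y₀, ∞)) < μ̄_t(y₀)`, and for every `x` strictly
inside it `A_x = (y₀, ∞)` has measure `μ_t((y₀, ∞)) < x`.
-/

open Filter Topology

section TailMeasure

variable {α : Type*} [MeasurableSpace α] (μ : Measure α)

theorem antitone_measure_Ici [Preorder α] : Antitone fun y => μ (Ici y) :=
  fun _ _ h => measure_mono (Ici_subset_Ici.2 h)

theorem measure_setOf_lt_measure_Ici_le_lt [LinearOrder α] (a : α) {y₀ : α} {c : ℝ≥0∞}
    (hlo : μ (Ioi y₀) < c) (hhi : c < μ (Ici y₀)) : μ {y | a < y ∧ μ (Ici y) ≤ c} < c := by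
  refine (measure_mono fun y hy => ?_).trans_lt hlo
  exact lt_of_not_ge fun hyy => (hy.2.trans_lt hhi).not_ge (antitone_measure_Ici μ hyy)

theorem tendsto_measure_Ici_atTop [LinearOrder α] [NoMaxOrder α] [TopologicalSpace α]
    [ClosedIciTopology α] [OpensMeasurableSpace α] [(atTop : Filter α).IsCountablyGenerated]
    (hfin : ∃ b, μ (Ici b) ≠ ∞) :
    Tendsto (fun y => μ (Ici y)) atTop (𝓝 0) := by
  have hInter : ⋂ y : α, Ici y = ∅ :=
    eq_empty_of_forall_notMem fun x hx =>
      (exists_gt x).elim fun y hy => hy.not_ge (mem_iInter.1 hx y)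
  have := tendsto_measure_iInter_atTop (μ := μ) (s := Ici)
    (fun _ => measurableSet_Ici.nullMeasurableSet) antitone_Ici hfin
  rwa [hInter, measure_empty] at this

variable [ConditionallyCompleteLinearOrder α] [TopologicalSpace α] [OrderTopology α]
  [FirstCountableTopology α] [DenselyOrdered α]

theorem tendsto_measure_Ici_nhdsGT [NoMaxOrder α] (a : α) :
    Tendsto (fun y => μ (Ici y)) (𝓝[>] a) (𝓝 (μ (Ioi a))) := by
  obtain ⟨u, hu_anti, hu_gt, hu_lim⟩ := exists_seq_strictAnti_tendsto a
  have hseq : Tendsto (fun n => μ (Ici (u n))) atTop (𝓝 (μ (Ioi a))) := by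
    rw [← iUnion_Ici_eq_Ioi_of_lt_of_tendsto hu_gt hu_lim]
    exact tendsto_measure_iUnion_atTop fun m n h => Ici_subset_Ici.2 (hu_anti.antitone h)
  have hlim := (antitone_measure_Ici μ).tendsto_nhdsGT a
  have hu : Tendsto u atTop (𝓝[>] a) := tendsto_nhdsWithin_iff.2 ⟨hu_lim, .of_forall hu_gt⟩
  rwa [tendsto_nhds_unique (hlim.comp hu) hseq] at hlim

theorem tendsto_measure_Ici_nhdsLT [OpensMeasurableSpace α] {a b : α} (hb : b < a)
    (hfin : μ (Ici b) ≠ ∞) : Tendsto (fun y => μ (Ici y)) (𝓝[<] a) (𝓝 (μ (Ici a))) := by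
  obtain ⟨u, hu_mono, hu_mem, hu_lim⟩ := exists_seq_strictMono_tendsto' hb
  have hseq : Tendsto (fun n => μ (Ici (u n))) atTop (𝓝 (μ (Ici a))) := by
    have hInter : ⋂ n, Ici (u n) = Ici a := by
      ext y
      simp only [mem_iInter, mem_Ici]
      exact ⟨fun h => le_of_tendsto' hu_lim h, fun h n => (hu_mem n).2.le.trans h⟩
    rw [← hInter]
    exact tendsto_measure_iInter_atTop (fun _ => measurableSet_Ici.nullMeasurableSet)
      (fun m n h => Ici_subset_Ici.2 (hu_mono.monotone h))
      ⟨0, ne_top_of_le_ne_top hfin (measure_mono (Ici_subset_Ici.2 (hu_mem 0).1.le))⟩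
  have hlim := (antitone_measure_Ici μ).tendsto_nhdsLT a
  have hu : Tendsto u atTop (𝓝[<] a) :=
    tendsto_nhdsWithin_iff.2 ⟨hu_lim, .of_forall fun n => (hu_mem n).2⟩
  rwa [tendsto_nhds_unique (hlim.comp hu) hseq] at hlim

/-- The tail is always left-continuous, so only its right limit `μ (Ioi a)` can differ from
`μ (Ici a)`. -/
theorem continuousAt_measure_Ici_iff [OpensMeasurableSpace α] [NoMaxOrder α] {a b : α}
    (hb : b < a) (hfin : μ (Ici b) ≠ ∞) :
    ContinuousAt (fun y => μ (Ici y)) a ↔ μ (Ioi a) = μ (Ici a) := by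
  rw [continuousAt_iff_continuous_left_right, ← continuousWithinAt_Iio_iff_Iic,
    ← continuousWithinAt_Ioi_iff_Ici]
  refine ⟨fun h => tendsto_nhds_unique (tendsto_measure_Ici_nhdsGT μ a) h.2, fun h => ?_⟩
  refine ⟨tendsto_measure_Ici_nhdsLT μ hb hfin, ?_⟩
  simpa only [ContinuousWithinAt, ← h] using tendsto_measure_Ici_nhdsGT μ a

theorem measure_le_of_isUpperSet [NoMaxOrder α] {A : Set α} (hA : IsUpperSet A)
    (hbdd : BddBelow A) {c : ℝ≥0∞} (hc : ∀ y ∈ A, μ (Ici y) ≤ c) : μ A ≤ c := by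
  rcases A.eq_empty_or_nonempty with rfl | hne
  · simp
  by_cases hmem : sInf A ∈ A
  · exact (measure_mono fun y hy => csInf_le hbdd hy).trans (hc _ hmem)
  · have hsub : A ⊆ Ioi (sInf A) := fun y hy =>
      (csInf_le hbdd hy).lt_of_ne fun h => hmem (h ▸ hy)
    refine (measure_mono hsub).trans (le_of_tendsto (tendsto_measure_Ici_nhdsGT μ _) ?_)
    filter_upwards [self_mem_nhdsWithin] with y hy
    obtain ⟨z, hz, hzy⟩ := (csInf_lt_iff hbdd hne).1 hy
    exact hc y (hA hzy.le hz)

theorem measure_setOf_lt_measure_Ici_le [NoMaxOrder α] (a : α) (c : ℝ≥0∞) :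
    μ {y | a < y ∧ μ (Ici y) ≤ c} ≤ c := by
  refine measure_le_of_isUpperSet μ (fun _ _ hyz hy => ?_) ⟨a, fun _ hy => hy.1.le⟩
    fun _ hy => hy.2
  exact ⟨hy.1.trans_le hyz, (antitone_measure_Ici μ hyz).trans hy.2⟩

theorem sigmaFinite_restrict_Ioi [NoMaxOrder α] [OpensMeasurableSpace α] {a : α}
    (hfin : ∀ b, a < b → μ (Ici b) ≠ ∞) : SigmaFinite (μ.restrict (Ioi a)) := by
  obtain ⟨u, -, hu_gt, hu_lim⟩ := exists_seq_strictAnti_tendsto a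
  refine ⟨⟨⟨fun n => Iic a ∪ Ici (u n), fun _ => trivial, fun n => ?_, ?_⟩⟩⟩
  · rw [Measure.restrict_apply (measurableSet_Iic.union measurableSet_Ici),
      union_inter_distrib_right, Iic_inter_Ioi, Ioc_self, empty_union]
    exact (measure_mono inter_subset_left).trans_lt (hfin _ (hu_gt n)).lt_top
  · rw [← union_iUnion, iUnion_Ici_eq_Ioi_of_lt_of_tendsto hu_gt hu_lim, Iic_union_Ioi]

end TailMeasure

theorem Eexp_eq_lintegral_Ioi (c : ℝ≥0∞) :
    Eexp c = ∫⁻ x in Ioi 0, {x : ℝ | c ≤ ENNReal.ofReal x}.indicator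
      (fun x => ENNReal.ofReal (Real.exp (-x))) x := by
  rcases eq_or_ne c ⊤ with rfl | hc
  · simp [Eexp]
  have hS : MeasurableSet {x : ℝ | c ≤ ENNReal.ofReal x} :=
    measurableSet_le measurable_const ENNReal.measurable_ofReal
  rw [lintegral_indicator hS, Measure.restrict_restrict hS]
  set r := c.toReal
  have hae : ({x : ℝ | c ≤ ENNReal.ofReal x} ∩ Ioi 0 : Set ℝ) =ᵐ[volume] Ioi r := by
    have hsub : {x : ℝ | c ≤ ENNReal.ofReal x} ∩ Ioi (0 : ℝ) ⊆ Ici r := fun x hx =>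
      (ENNReal.le_ofReal_iff_toReal_le hc hx.2.le).1 hx.1
    have hsup : Ioi r ⊆ {x : ℝ | c ≤ ENNReal.ofReal x} ∩ Ioi (0 : ℝ) := fun x hx =>
      have hx0 : 0 < x := toReal_nonneg.trans_lt hx
      ⟨(ENNReal.le_ofReal_iff_toReal_le hc hx0.le).2 (le_of_lt hx), hx0⟩
    exact (hsub.eventuallyLE.trans Ioi_ae_eq_Ici.symm.le).antisymm hsup.eventuallyLE
  rw [setLIntegral_congr hae, ← ofReal_integral_eq_lintegral_ofReal
    (integrableOn_exp_neg_Ioi r) (.of_forall fun x => (Real.exp_pos _).le),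
    integral_exp_neg_Ioi, Eexp, if_neg hc]

theorem lintegral_Eexp_comp_eq {α : Type*} [MeasurableSpace α] (μ : Measure α) [SFinite μ]
    {g : α → ℝ≥0∞} (hg : Measurable g) :
    ∫⁻ y, Eexp (g y) ∂μ =
      ∫⁻ x in Ioi (0 : ℝ), ENNReal.ofReal (Real.exp (-x)) * μ {y | g y ≤ ENNReal.ofReal x} := by
  let D : Set (α × ℝ) := {p | g p.1 ≤ ENNReal.ofReal p.2}
  have hD : MeasurableSet D :=
    measurableSet_le (hg.comp measurable_fst) (ENNReal.measurable_ofReal.comp measurable_snd)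
  let F : α → ℝ → ℝ≥0∞ := fun y x =>
    D.indicator (fun p => ENNReal.ofReal (Real.exp (-p.2))) (y, x)
  have hF : Measurable (Function.uncurry F) :=
    ((Real.measurable_exp.comp measurable_snd.neg).ennreal_ofReal).indicator hD
  calc ∫⁻ y, Eexp (g y) ∂μ = ∫⁻ y, (∫⁻ x in Ioi (0 : ℝ), F y x) ∂μ := by
        simp_rw [Eexp_eq_lintegral_Ioi]; rfl
    _ = ∫⁻ x in Ioi 0, ∫⁻ y, F y x ∂μ := lintegral_lintegral_swap hF.aemeasurable
    _ = _ := by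
        refine lintegral_congr fun x => ?_
        rw [← lintegral_indicator_const (measurableSet_le hg measurable_const)]
        rfl

theorem lintegral_exp_neg_mul_self_Ioi :
    ∫⁻ x in Ioi (0 : ℝ), ENNReal.ofReal (Real.exp (-x)) * ENNReal.ofReal x = 1 := by
  have hΓ := Real.Gamma_eq_integral (two_pos : (0 : ℝ) < 2)
  rw [Real.Gamma_two] at hΓ
  calc ∫⁻ x in Ioi (0 : ℝ), ENNReal.ofReal (Real.exp (-x)) * ENNReal.ofReal x
      = ∫⁻ x in Ioi (0 : ℝ), ENNReal.ofReal (Real.exp (-x) * x ^ ((2 : ℝ) - 1)) := by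
        refine setLIntegral_congr_fun measurableSet_Ioi fun x _ => ?_
        rw [ENNReal.ofReal_mul (Real.exp_pos _).le]
        norm_num
    _ = 1 := by
        rw [← ofReal_integral_eq_lintegral_ofReal (Real.GammaIntegral_convergent two_pos), ← hΓ,
          ENNReal.ofReal_one]
        exact (ae_restrict_iff' measurableSet_Ioi).2 (.of_forall fun x hx =>
          mul_nonneg (Real.exp_pos _).le (Real.rpow_nonneg (le_of_lt hx) _))

theorem lintegral_exp_neg_mul_Ioi_lt_one {F : ℝ → ℝ≥0∞} (hF : ∀ x, F x ≤ ENNReal.ofReal x)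
    {p q : ℝ} (hp : 0 ≤ p) (hpq : p < q) (hlt : ∀ x ∈ Ioo p q, F x < ENNReal.ofReal x) :
    ∫⁻ x in Ioi 0, ENNReal.ofReal (Real.exp (-x)) * F x < 1 := by
  have hle : ∀ x, ENNReal.ofReal (Real.exp (-x)) * F x ≤
      ENNReal.ofReal (Real.exp (-x)) * ENNReal.ofReal x := fun x => by gcongr; exact hF x
  rw [← lintegral_exp_neg_mul_self_Ioi]
  refine lintegral_strict_mono_of_ae_le_of_ae_lt_on (s := Ioo p q) (by fun_prop)
    (ne_top_of_le_ne_top (by simp [lintegral_exp_neg_mul_self_Ioi]) (lintegral_mono hle))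
    (.of_forall hle) ?_ (.of_forall fun x hx => ?_)
  · rw [Measure.restrict_apply measurableSet_Ioo,
      inter_eq_left.2 (Ioo_subset_Ioi_self.trans (Ioi_subset_Ioi hp)), Real.volume_Ioo]
    simpa using hpq
  · exact (ENNReal.mul_lt_mul_iff_right (by simpa using Real.exp_pos _) ofReal_ne_top).2
      (hlt x hx)

theorem measure_setOf_pos_measure_Ici_le_eq_of_continuousOn {μ : Measure ℝ}
    (hfin : ∀ ε : ℝ, 0 < ε → μ (Ici ε) ≠ ∞)
    (hinf : Tendsto (fun y => μ (Ici y)) (𝓝[>] 0) (𝓝 ⊤))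
    (hcont : ContinuousOn (fun y => μ (Ici y)) (Ioi 0)) {c : ℝ≥0∞} (hc0 : c ≠ 0)
    (hctop : c ≠ ⊤) :
    μ {y | 0 < y ∧ μ (Ici y) ≤ c} = c := by
  obtain ⟨y₀, hcy₀, hy₀⟩ : ∃ y₀, c ≤ μ (Ici y₀) ∧ 0 < y₀ :=
    ((hinf.eventually (le_mem_nhds hctop.lt_top)).and self_mem_nhdsWithin).exists
  obtain ⟨y₁, hcy₁, hy₀₁⟩ : ∃ y₁, μ (Ici y₁) ≤ c ∧ y₀ ≤ y₁ :=
    (((tendsto_measure_Ici_atTop μ ⟨y₀, hfin y₀ hy₀⟩).eventually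
      (ge_mem_nhds (pos_iff_ne_zero.2 hc0))).and (eventually_ge_atTop y₀)).exists
  obtain ⟨y, hy, hyc⟩ := intermediate_value_Icc' hy₀₁
    (hcont.mono fun z hz => hy₀.trans_le hz.1) ⟨hcy₁, hcy₀⟩
  refine le_antisymm (measure_setOf_lt_measure_Ici_le μ 0 c) ?_
  calc c = μ (Ici y) := hyc.symm
    _ ≤ μ {y | 0 < y ∧ μ (Ici y) ≤ c} := measure_mono fun z (hz : y ≤ z) =>
      ⟨hy₀.trans_le (hy.1.trans hz), (antitone_measure_Ici μ hz).trans hyc.le⟩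

theorem lintegral_Eexp_measure_Ici_Ioi_eq {μ : Measure ℝ}
    (hfin : ∀ ε : ℝ, 0 < ε → μ (Ici ε) ≠ ∞) :
    ∫⁻ y in Ioi (0 : ℝ), Eexp (μ (Ici y)) ∂μ =
      ∫⁻ x in Ioi (0 : ℝ), ENNReal.ofReal (Real.exp (-x)) *
        μ {y | 0 < y ∧ μ (Ici y) ≤ ENNReal.ofReal x} := by
  have := sigmaFinite_restrict_Ioi μ hfin
  rw [lintegral_Eexp_comp_eq _ (antitone_measure_Ici μ).measurable]
  refine lintegral_congr fun x => ?_
  rw [Measure.restrict_apply (measurableSet_le (antitone_measure_Ici μ).measurable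
    measurable_const), inter_comm]
  rfl

theorem lintegral_exp_neg_mul_measure_Ioi_lt_one_of_not_continuousOn {μ : Measure ℝ}
    (hfin : ∀ ε : ℝ, 0 < ε → μ (Ici ε) ≠ ∞)
    (hdisc : ¬ContinuousOn (fun y => μ (Ici y)) (Ioi 0)) :
    ∫⁻ x in Ioi (0 : ℝ), ENNReal.ofReal (Real.exp (-x)) *
      μ {y | 0 < y ∧ μ (Ici y) ≤ ENNReal.ofReal x} < 1 := by
  obtain ⟨y₀, hy₀, hy₀disc⟩ : ∃ y₀ : ℝ, 0 < y₀ ∧ ¬ContinuousAt (fun y => μ (Ici y)) y₀ := by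
    simpa [isOpen_Ioi.continuousOn_iff] using hdisc
  have hjump : μ (Ioi y₀) < μ (Ici y₀) :=
    (measure_mono Ioi_subset_Ici_self).lt_of_ne
      ((continuousAt_measure_Ici_iff μ (half_lt_self hy₀) (hfin _ (half_pos hy₀))).not.1 hy₀disc)
  refine lintegral_exp_neg_mul_Ioi_lt_one (fun x => measure_setOf_lt_measure_Ici_le μ 0 _)
    toReal_nonneg ((toReal_lt_toReal (ne_top_of_lt hjump) (hfin y₀ hy₀)).2 hjump) fun x hx => ?_
  exact measure_setOf_lt_measure_Ici_le_lt μ 0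
    ((lt_ofReal_iff_toReal_lt (ne_top_of_lt hjump)).2 hx.1)
    ((ofReal_lt_iff_lt_toReal (toReal_nonneg.trans hx.1.le) (hfin y₀ hy₀)).2 hx.2)

theorem tail_integral_identity_general
    (μt : Measure ℝ)
    (hfin : ∀ ε : ℝ, 0 < ε → μt (Set.Ici ε) ≠ ⊤)
    (μbar : ℝ → ℝ≥0∞) (hμbar : ∀ x, μbar x = μt (Set.Ici x))
    (hinf : Filter.Tendsto μbar (nhdsWithin 0 (Set.Ioi 0)) (nhds ⊤)) :
    (∫⁻ y in Set.Ioi (0 : ℝ), Eexp (μbar y) ∂μt =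
       ∫⁻ x in Set.Ioi (0 : ℝ),
         ENNReal.ofReal (Real.exp (-x)) *
           μt {y : ℝ | 0 < y ∧ μbar y ≤ ENNReal.ofReal x}) ∧
    (∀ x : ℝ, 0 < x → μt {y : ℝ | 0 < y ∧ μbar y ≤ ENNReal.ofReal x} ≤ ENNReal.ofReal x) ∧
    ((∫⁻ y in Set.Ioi (0 : ℝ), Eexp (μbar y) ∂μt = 1) ↔
      ContinuousOn μbar (Set.Ioi 0)) := by
  obtain rfl : μbar = fun x => μt (Ici x) := funext hμbar
  have hident := lintegral_Eexp_measure_Ici_Ioi_eq hfin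
  refine ⟨hident, fun x _ => measure_setOf_lt_measure_Ici_le μt 0 _, ?_⟩
  rw [hident]
  refine ⟨fun hone => ?_, fun hcont => ?_⟩
  · by_contra hdisc
    exact (lintegral_exp_neg_mul_measure_Ioi_lt_one_of_not_continuousOn hfin hdisc).ne hone
  · rw [← lintegral_exp_neg_mul_self_Ioi]
    refine setLIntegral_congr_fun measurableSet_Ioi fun x hx => ?_
    rw [measure_setOf_pos_measure_Ici_le_eq_of_continuousOn hfin hinf hcont
      (by simpa using hx) ofReal_ne_top]

/-- for a measure `μ_t` on `(0,∞)`, finite on `[ε,∞)` for all `ε > 0`,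
with tail `μ̄_t(x) = μ_t([x,∞))` satisfying `μ̄_t(0⁺) = ∞`,
`∫_{(0,∞)} exp(−μ̄_t(y)) μ_t(dy) = ∫_0^∞ e^{−x} μ_t(A_x) dx` with
`A_x = {y > 0 : μ̄_t(y) ≤ x}`; moreover `μ_t(A_x) ≤ x` always, and the integral equals
`1` iff `μ̄_t` is continuous on `(0,∞)`. -/
theorem tail_integral_identity
    (μt : Measure ℝ) (hs : μt (Set.Iic 0) = 0)
    (hfin : ∀ ε : ℝ, 0 < ε → μt (Set.Ici ε) ≠ ⊤)
    (μbar : ℝ → ℝ≥0∞) (hμbar : ∀ x, μbar x = μt (Set.Ici x))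
    (hinf : Filter.Tendsto μbar (nhdsWithin 0 (Set.Ioi 0)) (nhds ⊤)) :
    (∫⁻ y in Set.Ioi (0 : ℝ), Eexp (μbar y) ∂μt =
       ∫⁻ x in Set.Ioi (0 : ℝ),
         ENNReal.ofReal (Real.exp (-x)) *
           μt {y : ℝ | 0 < y ∧ μbar y ≤ ENNReal.ofReal x}) ∧
    (∀ x : ℝ, 0 < x → μt {y : ℝ | 0 < y ∧ μbar y ≤ ENNReal.ofReal x} ≤ ENNReal.ofReal x) ∧
    ((∫⁻ y in Set.Ioi (0 : ℝ), Eexp (μbar y) ∂μt = 1) ↔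
      ContinuousOn μbar (Set.Ioi 0)) :=
  tail_integral_identity_general μt hfin μbar hμbar hinf
end
end

section
/- Let η be a continuous simple max-stable random field with spectral measure σ (so the exponent measure is μ(A) = ∫_0^∞ σ({f : rf ∈ A}) r^{-2} dr and ∫ f(t) σ(df) = 1 for all t). Then for any t ∈ T and any measurable A ⊆ C_0 and Borel B ⊆ (0,∞): ∫_B ∫_{C_0} 1{(y/f(t)) f ∈ A} f(t) σ(df) μ_t(dy) = μ({f ∈ A : f(t) ∈ B}), where μ_t(dy) = y^{-2} 1{y>0} dy. Consequently the conditional kernel of μ given f(t) = y is P_t(y, A) = ∫_{C_0} 1{(y/f(t)) f ∈ A} f(t) σ(df). -/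
open MeasureTheory Set ENNReal

noncomputable section

/-!
Both sides are iterated integrals over `σ(df)` and over the ray through `f`, so by Tonelli it
suffices to compare them for a fixed `f`. Since `y⁻² dy` on `(0, ∞)` is carried to `c • y⁻² dy`
by `r ↦ r * c` for `c > 0`, the substitution `y = r f(t)` turns `f(t) y⁻² dy` into `r⁻² dr`.
When `f(t) ≤ 0` both sides vanish because `B ⊆ (0, ∞)`.
-/

/-- The marginal `μ_t(dy) = y⁻² dy` on `(0, ∞)`. -/
def invSqMeasure : Measure ℝ :=
  (volume.restrict (Ioi 0)).withDensity fun y => ENNReal.ofReal (y ^ 2)⁻¹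

instance : SFinite invSqMeasure := by
  rw [invSqMeasure]
  infer_instance

lemma setLIntegral_Ioi_comp_mul_right {c : ℝ} (hc : 0 < c) {g : ℝ → ℝ≥0∞}
    (hg : Measurable g) :
    ∫⁻ r in Ioi 0, g (r * c) = ENNReal.ofReal c⁻¹ * ∫⁻ y in Ioi 0, g y := by
  have hpre : (· * c) ⁻¹' Ioi (0 : ℝ) = Ioi 0 := by
    ext r; simp [mul_pos_iff_of_pos_right hc]
  have hmap := setLIntegral_map (μ := volume) (s := Ioi 0) measurableSet_Ioi hg
    (measurable_mul_const c)
  rw [hpre] at hmap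
  rw [← hmap, Real.map_volume_mul_right hc.ne', Measure.restrict_smul, lintegral_smul_measure,
    abs_of_pos (inv_pos.mpr hc), smul_eq_mul]

lemma lintegral_invSqMeasure_comp_mul_right {c : ℝ} (hc : 0 < c) {g : ℝ → ℝ≥0∞}
    (hg : Measurable g) :
    ∫⁻ r, g (r * c) ∂invSqMeasure = ENNReal.ofReal c * ∫⁻ y, g y ∂invSqMeasure := by
  have hw : Measurable fun y : ℝ => ENNReal.ofReal (y ^ 2)⁻¹ := by fun_prop
  have hscale : ∀ r ∈ Ioi (0 : ℝ), ENNReal.ofReal (r ^ 2)⁻¹ * g (r * c) =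
      ENNReal.ofReal (c ^ 2) * (ENNReal.ofReal ((r * c) ^ 2)⁻¹ * g (r * c)) := by
    intro r hr
    rw [← mul_assoc, ← ENNReal.ofReal_mul (sq_nonneg c)]
    congr 2
    have hr0 : r ≠ 0 := ne_of_gt hr
    field_simp
  rw [invSqMeasure, lintegral_withDensity_eq_lintegral_mul _ hw hg,
    lintegral_withDensity_eq_lintegral_mul _ hw (g := fun r => g (r * c)) (by fun_prop)]
  simp only [Pi.mul_apply]
  rw [setLIntegral_congr_fun measurableSet_Ioi hscale, lintegral_const_mul _ (by fun_prop),
    setLIntegral_Ioi_comp_mul_right hc (g := fun y => ENNReal.ofReal (y ^ 2)⁻¹ * g y)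
      (hw.mul hg), ← mul_assoc, ← ENNReal.ofReal_mul (sq_nonneg c)]
  congr 2
  field_simp

lemma invSqMeasure_Iic_zero : invSqMeasure (Iic 0) = 0 := by
  rw [invSqMeasure, withDensity_apply _ measurableSet_Iic,
    Measure.restrict_restrict measurableSet_Iic, Iic_inter_Ioi, Ioc_self,
    Measure.restrict_empty, lintegral_zero_measure]

lemma setLIntegral_invSqMeasure_div (c : ℝ) {B : Set ℝ} (hB : MeasurableSet B)
    (hBpos : B ⊆ Ioi 0) {φ : ℝ → ℝ≥0∞} (hφ : Measurable φ) :
    ∫⁻ y in B, φ (y / c) * ENNReal.ofReal c ∂invSqMeasure =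
      ∫⁻ r in (· * c) ⁻¹' B, φ r ∂invSqMeasure := by
  rcases le_or_gt c 0 with hc | hc
  · have hnull : invSqMeasure ((· * c) ⁻¹' B) = 0 := by
      refine measure_mono_null (fun r hr => ?_) invSqMeasure_Iic_zero
      exact not_lt.mp fun hr0 => (mul_nonpos_of_nonneg_of_nonpos hr0.le hc).not_gt (hBpos hr)
    simp [ENNReal.ofReal_of_nonpos hc, setLIntegral_measure_zero _ _ hnull]
  · rw [lintegral_mul_const (f := fun y => φ (y / c)) _ (by fun_prop),
      ← lintegral_indicator hB, mul_comm, ← lintegral_invSqMeasure_comp_mul_right hc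
        ((show Measurable fun y => φ (y / c) by fun_prop).indicator hB),
      ← lintegral_indicator (measurable_mul_const c hB)]
    congr 1 with r
    simp only [indicator, mul_div_cancel_right₀ r hc.ne']
    rfl

lemma setLIntegral_invSqMeasure_indicator_ray {T : Type*} [TopologicalSpace T]
    [MeasurableSpace C(T, ℝ)] [BorelSpace C(T, ℝ)] (t : T) {A : Set C(T, ℝ)}
    (hA : MeasurableSet A) {B : Set ℝ} (hB : MeasurableSet B) (hBpos : B ⊆ Ioi 0)
    (f : C(T, ℝ)) :
    ∫⁻ y in B, A.indicator 1 ((y / f t) • f) * ENNReal.ofReal (f t) ∂invSqMeasure =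
      ∫⁻ r, (A ∩ {g : C(T, ℝ) | g t ∈ B}).indicator 1 (r • f) ∂invSqMeasure := by
  have hray : Measurable fun r : ℝ => r • f := (continuous_id.smul continuous_const).measurable
  rw [setLIntegral_invSqMeasure_div (f t) hB hBpos (φ := fun r => A.indicator 1 (r • f))
    ((measurable_one.indicator hA).comp hray), ← lintegral_indicator (measurable_mul_const _ hB)]
  congr 1 with r
  by_cases hfA : r • f ∈ A <;> by_cases hfB : r * f t ∈ B <;> simp [hfA, hfB]

theorem maxstable_kernel_general {T : Type*} [MetricSpace T]
    [MeasurableSpace C(T, ℝ)] [BorelSpace C(T, ℝ)]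
    (σ : Measure C(T, ℝ)) [IsProbabilityMeasure σ]
    (μ : Measure C(T, ℝ))
    (hμdef : ∀ A : Set C(T, ℝ), MeasurableSet A →
      μ A = ∫⁻ r in Set.Ioi (0 : ℝ), σ {f : C(T, ℝ) | r • f ∈ A} *
        ENNReal.ofReal (r ^ 2)⁻¹)
    (t : T)
    (Pt : ℝ → Set C(T, ℝ) → ℝ≥0∞)
    (hPt : ∀ y A, Pt y A =
      ∫⁻ f, A.indicator 1 ((y / f t) • f) * ENNReal.ofReal (f t) ∂σ) :
    ∀ A : Set C(T, ℝ), MeasurableSet A →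
    ∀ B : Set ℝ, MeasurableSet B → B ⊆ Set.Ioi 0 →
      ∫⁻ y in B, Pt y A
          ∂((volume.restrict (Set.Ioi (0 : ℝ))).withDensity
              fun y => ENNReal.ofReal (y ^ 2)⁻¹) =
        μ (A ∩ {f : C(T, ℝ) | f t ∈ B}) := by
  intro A hA B hB hBpos
  have heval : Measurable fun f : C(T, ℝ) => f t := (continuous_eval_const t).measurable
  have hsmul : Measurable fun p : ℝ × C(T, ℝ) => p.1 • p.2 := continuous_smul.measurable
  set S := A ∩ {f : C(T, ℝ) | f t ∈ B}
  have hS : MeasurableSet S := hA.inter (heval hB)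
  have hleft : ∫⁻ y in B, Pt y A ∂invSqMeasure =
      ∫⁻ f, ∫⁻ y in B, A.indicator 1 ((y / f t) • f) * ENNReal.ofReal (f t) ∂invSqMeasure ∂σ := by
    simp_rw [hPt]
    exact lintegral_lintegral_swap (((measurable_one.indicator hA).comp (hsmul.comp
      ((measurable_fst.div (heval.comp measurable_snd)).prodMk measurable_snd))).mul
      (by fun_prop)).aemeasurable
  have hright : μ S = ∫⁻ f, ∫⁻ r, S.indicator 1 (r • f) ∂invSqMeasure ∂σ := by
    rw [hμdef S hS, lintegral_lintegral_swap (f := fun f r => S.indicator 1 (r • f))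
      ((measurable_one.indicator hS).comp (hsmul.comp (measurable_snd.prodMk measurable_fst))).aemeasurable, invSqMeasure,
      lintegral_withDensity_eq_lintegral_mul_non_measurable _ (by fun_prop)
        (ae_of_all _ fun _ => ofReal_lt_top)]
    refine setLIntegral_congr_fun measurableSet_Ioi fun r _ => ?_
    have hSr : MeasurableSet {f : C(T, ℝ) | r • f ∈ S} := measurable_const_smul r hS
    rw [Pi.mul_apply, mul_comm, ← lintegral_indicator_one hSr]
    rfl
  change ∫⁻ y in B, Pt y A ∂invSqMeasure = μ S
  rw [hleft, hright]
  exact lintegral_congr (setLIntegral_invSqMeasure_indicator_ray t hA hB hBpos)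

/-- Proposition 4.2, kernel identity: for a simple max-stable exponent
measure `μ(A) = ∫_0^∞ σ{f : r f ∈ A} r^{-2} dr`,
`∫_B ∫ 1{(y/f(t)) f ∈ A} f(t) σ(df) μ_t(dy) = μ({f ∈ A : f(t) ∈ B})` with
`μ_t(dy) = y^{-2} 1{y>0} dy`; hence `P_t(y,A) = ∫ 1{(y/f(t)) f ∈ A} f(t) σ(df)` is the
conditional kernel of `μ` given `f(t) = y`. -/
theorem maxstable_kernel {T : Type*} [MetricSpace T] [CompactSpace T]
    [MeasurableSpace C(T, ℝ)] [BorelSpace C(T, ℝ)]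
    (σ : Measure C(T, ℝ)) [IsProbabilityMeasure σ]
    (hσ0 : ∀ᵐ f ∂σ, 0 ≤ f ∧ f ≠ 0)
    (hσ1 : ∀ s : T, ∫⁻ f, ENNReal.ofReal (f s) ∂σ = 1)
    (hσn : ∫⁻ f, ENNReal.ofReal ‖f‖ ∂σ ≠ ⊤)
    (μ : Measure C(T, ℝ))
    (hμdef : ∀ A : Set C(T, ℝ), MeasurableSet A →
      μ A = ∫⁻ r in Set.Ioi (0 : ℝ), σ {f : C(T, ℝ) | r • f ∈ A} *
        ENNReal.ofReal (r ^ 2)⁻¹)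
    (t : T) (hσt : σ {f : C(T, ℝ) | f t = 0} = 0)
    (Pt : ℝ → Set C(T, ℝ) → ℝ≥0∞)
    (hPt : ∀ y A, Pt y A =
      ∫⁻ f, A.indicator 1 ((y / f t) • f) * ENNReal.ofReal (f t) ∂σ) :
    ∀ A : Set C(T, ℝ), MeasurableSet A →
    ∀ B : Set ℝ, MeasurableSet B → B ⊆ Set.Ioi 0 →
      ∫⁻ y in B, Pt y A
          ∂((volume.restrict (Set.Ioi (0 : ℝ))).withDensity
              fun y => ENNReal.ofReal (y ^ 2)⁻¹) =
        μ (A ∩ {f : C(T, ℝ) | f t ∈ B}) :=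
  maxstable_kernel_general σ μ hμdef t Pt hPt
end
end
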